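/- arXiv:2103.15064 — 5 statements merged into one kernel-verified Lean document; each statement's English description precedes it below -/
import Mathlib

section
/- Let t_p(x) = (1-x^2)/(1-x^p) for x ∈ [0,1). For each p ∈ (0,2), the function t_p is strictly increasing on [0,1) and takes values in [1, 2/p); for each p > 2, the function t_p is strictly decreasing on [0,1) and takes values in (2/p, 1]. -/
/-!
Writing `x = e^l` with `l < 0`, the bound `2/p` for `t_p` and the sign of its derivative both
compare `q ↦ x^q` at the exponents `q = p` and `q = 2`. Each comparison is an instance of the
fact that the slope `(e^s - 1)/s` of the exponential at `0` is strictly increasing in `s`,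
which is strict convexity of `exp`.
-/

open Real Set

lemma exp_sub_one_div_lt_exp_sub_one_div {s t : ℝ} (hs : s ≠ 0) (ht : t ≠ 0) (hst : s < t) :
    (exp s - 1) / s < (exp t - 1) / t := by
  simpa using strictConvexOn_exp.secant_strict_mono (mem_univ 0) (mem_univ s) (mem_univ t)
    hs ht hst

lemma mul_one_sub_rpow_lt {q r x : ℝ} (hq : 0 < q) (hqr : q < r) (hx0 : 0 ≤ x) (hx1 : x < 1) :
    q * (1 - x ^ r) < r * (1 - x ^ q) := by
  rcases hx0.eq_or_lt with rfl | hx0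
  · simpa [zero_rpow hq.ne', zero_rpow (hq.trans hqr).ne'] using hqr
  have hl : log x < 0 := log_neg hx0 hx1
  have hr : r * log x ≠ 0 := by nlinarith
  have hq' : q * log x ≠ 0 := by nlinarith
  have hslope := exp_sub_one_div_lt_exp_sub_one_div hr hq' (by nlinarith)
  have er := div_mul_cancel₀ (exp (r * log x) - 1) hr
  have eq := div_mul_cancel₀ (exp (q * log x) - 1) hq'
  generalize (exp (r * log x) - 1) / (r * log x) = A at hslope er
  generalize (exp (q * log x) - 1) / (q * log x) = B at hslope eq
  have hK : 0 < q * r * -log x := by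
    have := hq.trans hqr; have := neg_pos.2 hl; positivity
  rw [rpow_def_of_pos hx0, rpow_def_of_pos hx0, mul_comm (log x), mul_comm (log x)]
  calc q * (1 - exp (r * log x)) = A * (q * r * -log x) := by linear_combination q * er
    _ < B * (q * r * -log x) := mul_lt_mul_of_pos_right hslope hK
    _ = r * (1 - exp (q * log x)) := by linear_combination (-r) * eq

lemma mul_rpow_mul_one_sub_rpow_lt {q r x : ℝ} (hq : 0 < q) (hqr : q < r)
    (hx0 : 0 < x) (hx1 : x < 1) : r * x ^ r * (1 - x ^ q) < q * x ^ q * (1 - x ^ r) := by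
  have hl : log x < 0 := log_neg hx0 hx1
  have hq' : -(q * log x) ≠ 0 := by nlinarith
  have hr : -(r * log x) ≠ 0 := by nlinarith
  have hslope := exp_sub_one_div_lt_exp_sub_one_div hq' hr (by nlinarith)
  have eq := div_mul_cancel₀ (exp (-(q * log x)) - 1) hq'
  have er := div_mul_cancel₀ (exp (-(r * log x)) - 1) hr
  generalize (exp (-(q * log x)) - 1) / -(q * log x) = A at hslope eq
  generalize (exp (-(r * log x)) - 1) / -(r * log x) = B at hslope er
  have hxq : x ^ q * exp (-(q * log x)) = 1 := by
    rw [rpow_def_of_pos hx0, ← exp_add]; ring_nf; exact exp_zero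
  have hxr : x ^ r * exp (-(r * log x)) = 1 := by
    rw [rpow_def_of_pos hx0, ← exp_add]; ring_nf; exact exp_zero
  have hK : 0 < q * r * -log x * (x ^ q * x ^ r) := by
    have := rpow_pos_of_pos hx0 q; have := rpow_pos_of_pos hx0 r
    have := hq.trans hqr; have := neg_pos.2 hl; positivity
  calc r * x ^ r * (1 - x ^ q) = A * (q * r * -log x * (x ^ q * x ^ r)) := by
        linear_combination (-r * x ^ r) * hxq - (r * x ^ q * x ^ r) * eq
    _ < B * (q * r * -log x * (x ^ q * x ^ r)) := mul_lt_mul_of_pos_right hslope hK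
    _ = q * x ^ q * (1 - x ^ r) := by
        linear_combination (q * x ^ q) * hxr + (q * x ^ q * x ^ r) * er

/-- The paper's `t_p(x)`. -/
noncomputable def powRatio (p x : ℝ) : ℝ := (1 - x ^ 2) / (1 - x ^ p)

lemma one_sub_rpow_pos {p x : ℝ} (hp : 0 < p) (hx : x ∈ Ico (0 : ℝ) 1) : 0 < 1 - x ^ p :=
  sub_pos.2 (rpow_lt_one hx.1 hx.2 hp)

lemma powRatio_zero {p : ℝ} (hp : 0 < p) : powRatio p 0 = 1 := by
  simp [powRatio, zero_rpow hp.ne']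

lemma continuousOn_powRatio {p : ℝ} (hp : 0 < p) : ContinuousOn (powRatio p) (Ico 0 1) :=
  ContinuousOn.div (by fun_prop) (continuousOn_const.sub (continuousOn_id.rpow_const
    fun _ _ => Or.inr hp.le)) fun _ hx => (one_sub_rpow_pos hp hx).ne'

lemma hasDerivAt_powRatio {p x : ℝ} (hp : 0 < p) (hx0 : 0 < x) (hx1 : x < 1) :
    HasDerivAt (powRatio p)
      ((p * x ^ p * (1 - x ^ 2) - 2 * x ^ 2 * (1 - x ^ p)) / (x * (1 - x ^ p) ^ 2)) x := by
  have hden := one_sub_rpow_pos hp ⟨hx0.le, hx1⟩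
  have hnum : HasDerivAt (fun y : ℝ => 1 - y ^ 2) (-(2 * x)) x := by
    simpa using (hasDerivAt_pow 2 x).const_sub 1
  refine (hnum.div ((hasDerivAt_rpow_const (Or.inl hx0.ne')).const_sub 1) hden.ne').congr_deriv ?_
  rw [rpow_sub_one hx0.ne']
  field_simp
  ring

lemma strictMonoOn_powRatio {p : ℝ} (hp : 0 < p) (hp2 : p < 2) :
    StrictMonoOn (powRatio p) (Ico 0 1) := by
  refine strictMonoOn_of_deriv_pos (convex_Ico 0 1) (continuousOn_powRatio hp) fun x hx => ?_
  rw [interior_Ico] at hx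
  rw [(hasDerivAt_powRatio hp hx.1 hx.2).deriv]
  have key := mul_rpow_mul_one_sub_rpow_lt hp hp2 hx.1 hx.2
  rw [rpow_two] at key
  have hden := one_sub_rpow_pos hp ⟨hx.1.le, hx.2⟩
  exact div_pos (by linarith) (mul_pos hx.1 (pow_pos hden 2))

lemma strictAntiOn_powRatio {p : ℝ} (hp2 : 2 < p) :
    StrictAntiOn (powRatio p) (Ico 0 1) := by
  have hp : 0 < p := by linarith
  refine strictAntiOn_of_deriv_neg (convex_Ico 0 1) (continuousOn_powRatio hp) fun x hx => ?_
  rw [interior_Ico] at hx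
  rw [(hasDerivAt_powRatio hp hx.1 hx.2).deriv]
  have key := mul_rpow_mul_one_sub_rpow_lt two_pos hp2 hx.1 hx.2
  rw [rpow_two] at key
  have hden := one_sub_rpow_pos hp ⟨hx.1.le, hx.2⟩
  exact div_neg_of_neg_of_pos (by linarith) (mul_pos hx.1 (pow_pos hden 2))

/-- For `p ∈ (0,2)`, the function `t_p(x) = (1-x^2)/(1-x^p)` is strictly increasing on
`[0,1)` with values in `[1, 2/p)`; for `p > 2` it is strictly decreasing on `[0,1)` with
values in `(2/p, 1]`. -/
theorem statement1 (p : ℝ) (hp : 0 < p) :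
    (p < 2 →
      StrictMonoOn (fun x : ℝ => (1 - x ^ 2) / (1 - x ^ p)) (Set.Ico (0 : ℝ) 1) ∧
      ∀ x ∈ Set.Ico (0 : ℝ) 1, (1 - x ^ 2) / (1 - x ^ p) ∈ Set.Ico (1 : ℝ) (2 / p)) ∧
    (2 < p →
      StrictAntiOn (fun x : ℝ => (1 - x ^ 2) / (1 - x ^ p)) (Set.Ico (0 : ℝ) 1) ∧
      ∀ x ∈ Set.Ico (0 : ℝ) 1, (1 - x ^ 2) / (1 - x ^ p) ∈ Set.Ioc (2 / p) (1 : ℝ)) := by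
  have hzero : (0 : ℝ) ∈ Ico (0 : ℝ) 1 := ⟨le_rfl, one_pos⟩
  refine ⟨fun hp2 => ⟨strictMonoOn_powRatio hp hp2, fun x hx => ⟨?_, ?_⟩⟩,
    fun hp2 => ⟨strictAntiOn_powRatio hp2, fun x hx => ⟨?_, ?_⟩⟩⟩
  · have := (strictMonoOn_powRatio hp hp2).monotoneOn hzero hx hx.1
    rwa [powRatio_zero hp] at this
  · rw [div_lt_div_iff₀ (one_sub_rpow_pos hp hx) hp, ← rpow_two]
    linarith [mul_one_sub_rpow_lt hp hp2 hx.1 hx.2]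
  · rw [div_lt_div_iff₀ hp (one_sub_rpow_pos hp hx), ← rpow_two]
    linarith [mul_one_sub_rpow_lt two_pos hp2 hx.1 hx.2]
  · have := (strictAntiOn_powRatio hp2).antitoneOn hzero hx hx.1
    rwa [powRatio_zero hp] at this
end

section
/- Let p > 0 and a ∈ [C(p), 1), and let ω_a(z) = (z+a)/(1+az), whose Taylor coefficients are a_0 = a and a_k = (1-a^2)(-a)^{k-1} for k ≥ 1. Then for r ∈ [0,1), the quantity |a_0|^p + Σ_{k=1}^∞ |a_k| r^k = a^p + (1-a^2)r/(1-ar) is strictly greater than 1 if and only if r > r_p(a). In particular, the radius r_p(|a_0|) in the improved Bohr inequality cannot be improved when |a_0| ∈ [C(p), 1). -/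
/-- `C p` is the unique solution in `(0,1)` of `1 - x - x^p = 0` (for `p > 0`),
realized via Hilbert's epsilon operator. -/
noncomputable def Cp (p : ℝ) : ℝ :=
  Classical.epsilon (fun x : ℝ => x ∈ Set.Ioo (0 : ℝ) 1 ∧ 1 - x - x ^ p = 0)

/-- The function `r_p : [0,1] → ℝ` from the paper. -/
noncomputable def rp (p : ℝ) : ℝ → ℝ := fun x =>
  if x = 1 then p / (2 + p)
  else if x < Cp p then (1 - x ^ p) / Real.sqrt (1 - x ^ 2 + (1 - x ^ p) ^ 2)
  else (1 - x ^ p) / (1 - x ^ 2 + x * (1 - x ^ p))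

lemma Cp_spec (p : ℝ) (hp : 0 < p) :
    Cp p ∈ Set.Ioo (0 : ℝ) 1 ∧ 1 - Cp p - Cp p ^ p = 0 := by
  apply Classical.epsilon_spec
    (p := fun x : ℝ => x ∈ Set.Ioo (0 : ℝ) 1 ∧ 1 - x - x ^ p = 0)
  have hcont : Continuous (fun x : ℝ => 1 - x - x ^ p) := by
    have h : Continuous (fun x : ℝ => x ^ p) :=
      continuous_iff_continuousAt.2 fun x => Real.continuousAt_rpow_const x p (Or.inr hp.le)
    exact (continuous_const.sub continuous_id).sub h
  have h0 : (fun x : ℝ => 1 - x - x ^ p) 0 = 1 := by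
    simp [Real.zero_rpow hp.ne']
  have h1 : (fun x : ℝ => 1 - x - x ^ p) 1 = -1 := by
    simp [Real.one_rpow]
  have hsub := intermediate_value_Ioo' (zero_le_one) hcont.continuousOn
  simp only [Real.one_rpow, Real.zero_rpow hp.ne'] at hsub
  norm_num at hsub
  obtain ⟨c, hc, hfc⟩ := hsub (show (0 : ℝ) ∈ Set.Ioo (-1 : ℝ) 1 by norm_num)
  exact ⟨c, hc, hfc⟩

/-- Sharpness of the radius `r_p(|a_0|)` for `|a_0| ∈ [C(p),1)`: for the function
`ω_a(z) = (z+a)/(1+az)` with coefficients `a_0 = a`, `a_k = (1-a^2)(-a)^{k-1}` for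
`k ≥ 1`, the quantity `|a_0|^p + Σ_{k≥1} |a_k| r^k` equals `a^p + (1-a^2)r/(1-ar)`,
and this exceeds `1` exactly when `r > r_p(a)`. -/
theorem statement4 (p a : ℝ) (hp : 0 < p) (ha : a ∈ Set.Ico (Cp p) 1)
    (r : ℝ) (hr : r ∈ Set.Ico (0 : ℝ) 1) :
    a ^ p + (∑' k : ℕ, ((1 - a ^ 2) * a ^ k) * r ^ (k + 1)) =
        a ^ p + (1 - a ^ 2) * r / (1 - a * r) ∧
    (1 < a ^ p + (1 - a ^ 2) * r / (1 - a * r) ↔ rp p a < r) := by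
  obtain ⟨haC, ha1⟩ := ha
  obtain ⟨⟨hC0, hC1⟩, hCeq⟩ := Cp_spec p hp
  have ha0 : 0 < a := lt_of_lt_of_le hC0 haC
  obtain ⟨hr0, hr1⟩ := hr
  have hap : a ^ p < 1 := Real.rpow_lt_one ha0.le ha1 hp
  have har : a * r < 1 := by nlinarith
  have h1ar : 0 < 1 - a * r := by linarith
  constructor
  · congr 1
    have hgeo : (∑' k : ℕ, ((1 - a ^ 2) * a ^ k) * r ^ (k + 1))
        = ∑' k : ℕ, ((1 - a ^ 2) * r) * (a * r) ^ k := by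
      congr 1; ext k; ring
    rw [hgeo, tsum_mul_left, tsum_geometric_of_lt_one (by positivity) har]
    field_simp
  · have hrp : rp p a = (1 - a ^ p) / (1 - a ^ 2 + a * (1 - a ^ p)) := by
      rw [rp]; rw [if_neg ha1.ne, if_neg (not_lt.2 haC)]
    have hD : 0 < 1 - a ^ 2 + a * (1 - a ^ p) := by nlinarith
    have step : (1 < a ^ p + (1 - a ^ 2) * r / (1 - a * r)) ↔
        1 - a ^ p < (1 - a ^ 2) * r / (1 - a * r) := by
      constructor <;> intro h <;> linarith
    rw [step, hrp, div_lt_iff₀ hD, lt_div_iff₀ h1ar]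
    constructor <;> intro h <;> nlinarith
end

section
/- Let p > 0, b = 1/√2, and f(z) = z·(z+b)/(1+bz), with Taylor expansion f(z) = Σ_{k=1}^∞ a_k z^k (so a_0 = 0). Then for r ∈ [0,1), Σ_{k=1}^∞ |a_k| r^k = br/(1-br), and this is strictly greater than 1 if and only if r > 1/√2. In particular, the radius r_p(0) = 1/√2 in the improved Bohr inequality cannot be improved when a_0 = 0. -/
/-!
Expanding `1 / (1 + b z)` as a geometric series gives
`z (z + b) / (1 + b z) = b z + (1 - b²) z² ∑ₙ (-b z)ⁿ`, and by uniqueness of power series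
these are the `a_k`. Hence `∑ |a_k| rᵏ = b r + (1 - b²) r² / (1 - b r)`, which for `b² = 1/2`
collapses to `b r / (1 - b r)`; this exceeds `1` exactly when `b r > 1/2`.
-/

open FormalMultilinearSeries

section Uniqueness

variable {𝕜 : Type*} [NontriviallyNormedField 𝕜] {a c : ℕ → 𝕜} {g : 𝕜 → 𝕜}

theorem hasFPowerSeriesOnBall_ofScalars_of_forall_hasSum {w : 𝕜} (hw : w ≠ 0)
    (ha : ∀ z : 𝕜, ‖z‖ ≤ ‖w‖ → HasSum (fun k => a k * z ^ k) (g z)) :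
    HasFPowerSeriesOnBall g (ofScalars 𝕜 a) 0 ‖w‖ₑ where
  r_le := by
    refine (ofScalars 𝕜 a).le_radius_of_tendsto (l := 0) ?_
    simpa [ofScalars_norm] using (ha w le_rfl).summable.tendsto_atTop_zero.norm
  r_pos := by simpa using hw
  hasSum {z} hz := by
    rw [Metric.mem_eball, edist_zero_right, enorm_eq_nnnorm, enorm_eq_nnnorm, ENNReal.coe_lt_coe,
      ← NNReal.coe_lt_coe, coe_nnnorm, coe_nnnorm] at hz
    simpa only [ofScalars_apply_eq, smul_eq_mul, zero_add] using ha z hz.le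

theorem eq_of_forall_hasSum_pow {R : ℝ} (hR : 0 < R)
    (ha : ∀ z : 𝕜, ‖z‖ < R → HasSum (fun k => a k * z ^ k) (g z))
    (hc : ∀ z : 𝕜, ‖z‖ < R → HasSum (fun k => c k * z ^ k) (g z)) : a = c := by
  obtain ⟨w, hw0, hwR⟩ := NormedField.exists_norm_lt 𝕜 hR
  have hw : w ≠ 0 := norm_pos_iff.mp hw0
  have hpa := hasFPowerSeriesOnBall_ofScalars_of_forall_hasSum hw fun z hz => ha z (hz.trans_lt hwR)
  have hpc := hasFPowerSeriesOnBall_ofScalars_of_forall_hasSum hw fun z hz => hc z (hz.trans_lt hwR)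
  exact ofScalars_series_injective 𝕜 𝕜
    (hpa.hasFPowerSeriesAt.eq_formalMultilinearSeries hpc.hasFPowerSeriesAt)

end Uniqueness

section MobiusSeries

variable {𝕜 : Type*} [NormedField 𝕜]

def zMobiusCoeff (b : 𝕜) : ℕ → 𝕜
  | 0 => 0
  | 1 => b
  | n + 2 => (1 - b ^ 2) * (-b) ^ n

theorem hasSum_zMobiusCoeff_mul_pow {b z : 𝕜} (hbz : ‖b * z‖ < 1) :
    HasSum (fun k => zMobiusCoeff b k * z ^ k) (z * (z + b) / (1 + b * z)) := by
  have hden : 1 + b * z ≠ 0 := by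
    intro h
    rw [← neg_eq_of_add_eq_zero_right h, norm_neg, norm_one] at hbz
    exact lt_irrefl _ hbz
  have htail : HasSum (fun n => (1 - b ^ 2) * z ^ 2 * (-(b * z)) ^ n)
      ((1 - b ^ 2) * z ^ 2 * (1 + b * z)⁻¹) := by
    have hgeom := hasSum_geometric_of_norm_lt_one (ξ := -(b * z)) (by rwa [norm_neg])
    rw [sub_neg_eq_add] at hgeom
    exact hgeom.mul_left _
  have hterms : (fun n => zMobiusCoeff b (n + 2) * z ^ (n + 2))
      = fun n => (1 - b ^ 2) * z ^ 2 * (-(b * z)) ^ n := by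
    funext n
    simp only [zMobiusCoeff, neg_mul_eq_neg_mul (b := z), mul_pow]
    ring
  have hhead : z * (z + b) / (1 + b * z) - ∑ k ∈ Finset.range 2, zMobiusCoeff b k * z ^ k
      = (1 - b ^ 2) * z ^ 2 * (1 + b * z)⁻¹ := by
    simp only [Finset.sum_range_succ, Finset.sum_range_zero, zMobiusCoeff]
    linear_combination (b * z) * mul_inv_cancel₀ hden
  rwa [← hasSum_nat_add_iff' 2, hterms, hhead]

theorem hasSum_norm_zMobiusCoeff_succ_mul_pow {b : 𝕜} {r : ℝ} (hr : 0 ≤ r)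
    (hbr : ‖b‖ * r < 1) :
    HasSum (fun k => ‖zMobiusCoeff b (k + 1)‖ * r ^ (k + 1))
      (‖b‖ * r + ‖1 - b ^ 2‖ * r ^ 2 / (1 - ‖b‖ * r)) := by
  have htail : HasSum (fun n => ‖1 - b ^ 2‖ * r ^ 2 * (‖b‖ * r) ^ n)
      (‖1 - b ^ 2‖ * r ^ 2 * (1 - ‖b‖ * r)⁻¹) :=
    (hasSum_geometric_of_lt_one (by positivity) hbr).mul_left _
  have hterms : (fun n => ‖zMobiusCoeff b (n + 1 + 1)‖ * r ^ (n + 1 + 1))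
      = fun n => ‖1 - b ^ 2‖ * r ^ 2 * (‖b‖ * r) ^ n := by
    funext n
    simp only [zMobiusCoeff, norm_mul, norm_pow, norm_neg]
    ring
  have hhead : ‖b‖ * r + ‖1 - b ^ 2‖ * r ^ 2 / (1 - ‖b‖ * r)
      - ∑ k ∈ Finset.range 1, ‖zMobiusCoeff b (k + 1)‖ * r ^ (k + 1)
      = ‖1 - b ^ 2‖ * r ^ 2 * (1 - ‖b‖ * r)⁻¹ := by
    simp only [Finset.sum_range_one, zero_add, zMobiusCoeff, pow_one]
    ring
  rwa [← hasSum_nat_add_iff' 1, hterms, hhead]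

end MobiusSeries

theorem one_lt_div_one_sub_iff {t : ℝ} (ht : t < 1) : 1 < t / (1 - t) ↔ 1 / 2 < t := by
  rw [one_lt_div (sub_pos.mpr ht)]
  constructor <;> intro h <;> linarith

theorem statement5_general (b : ℝ) (hb : b = 1 / Real.sqrt 2)
    (a : ℕ → ℂ)
    (ha : ∀ z : ℂ, ‖z‖ < 1 →
      HasSum (fun k : ℕ => a k * z ^ k) (z * (z + (b : ℂ)) / (1 + (b : ℂ) * z)))
    (r : ℝ) (hr : r ∈ Set.Ico (0 : ℝ) 1) :
    (∑' k : ℕ, ‖a (k + 1)‖ * r ^ (k + 1)) = b * r / (1 - b * r) ∧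
    (1 < b * r / (1 - b * r) ↔ 1 / Real.sqrt 2 < r) := by
  obtain ⟨hr0, hr1⟩ := hr
  have hsqrt : Real.sqrt 2 * Real.sqrt 2 = 2 := Real.mul_self_sqrt zero_le_two
  have hsqrt_pos : 0 < Real.sqrt 2 := by positivity
  have hb_sq : b ^ 2 = 1 / 2 := by rw [hb, div_pow, Real.sq_sqrt zero_le_two, one_pow]
  have hb_pos : 0 < b := by rw [hb]; positivity
  have hb_lt : b < 1 := by nlinarith
  have hbr : b * r < 1 := by nlinarith
  have hnorm_b : ‖(b : ℂ)‖ = b := by rw [Complex.norm_real, Real.norm_of_nonneg hb_pos.le]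
  have hnorm_one_sub : ‖1 - (b : ℂ) ^ 2‖ = 1 / 2 := by
    rw [← Complex.ofReal_pow, hb_sq]; norm_num
  have hcoeff : a = zMobiusCoeff (b : ℂ) :=
    eq_of_forall_hasSum_pow one_pos ha fun z hz => hasSum_zMobiusCoeff_mul_pow <| by
      rw [norm_mul, hnorm_b]; nlinarith [norm_nonneg z]
  have hsum := hasSum_norm_zMobiusCoeff_succ_mul_pow (b := (b : ℂ)) hr0 (by rwa [hnorm_b])
  rw [← hcoeff, hnorm_b, hnorm_one_sub] at hsum
  refine ⟨hsum.tsum_eq.trans ?_, ?_⟩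
  · field_simp [(sub_pos.mpr hbr).ne']
    linear_combination (-2 * r ^ 2) * hb_sq
  · rw [one_lt_div_one_sub_iff hbr, hb, one_div_mul_eq_div, div_lt_iff₀ hsqrt_pos,
      lt_div_iff₀ hsqrt_pos]
    constructor <;> intro h <;> nlinarith

/-- Sharpness of the radius `r_p(0) = 1/√2` in the improved Bohr inequality when
`a_0 = 0`: for `b = 1/√2` and `f(z) = z(z+b)/(1+bz)` with Taylor coefficients `a_k`
(`a_0 = 0`), one has `Σ_{k≥1} |a_k| r^k = br/(1-br)` for `r ∈ [0,1)`, and this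
exceeds `1` exactly when `r > 1/√2`. -/
theorem statement5 (p : ℝ) (hp : 0 < p) (b : ℝ) (hb : b = 1 / Real.sqrt 2)
    (a : ℕ → ℂ) (ha0 : a 0 = 0)
    (ha : ∀ z : ℂ, ‖z‖ < 1 →
      HasSum (fun k : ℕ => a k * z ^ k) (z * (z + (b : ℂ)) / (1 + (b : ℂ) * z)))
    (r : ℝ) (hr : r ∈ Set.Ico (0 : ℝ) 1) :
    (∑' k : ℕ, ‖a (k + 1)‖ * r ^ (k + 1)) = b * r / (1 - b * r) ∧
    (1 < b * r / (1 - b * r) ↔ 1 / Real.sqrt 2 < r) :=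
  statement5_general b hb a ha r hr
end

section
/- For every a ∈ (1/√2, 1) and every r ∈ [0,1), the identity ((r-a)/(1-ar))^2 + 2(1-a^2)·Σ_{k=1}^∞ a^{k-2}((k+1)a^2 - (k-1))·r^k = 1 - (1-a^2)((1+2a^2)r^2 - 4ar + 1)/(1-ar)^2 holds; equivalently, the left-hand side equals 1 - (1-a^2)(1+2a^2)(r - α_+)(r - α_-)/(1-ar)^2, where α_± = 1/(2a ± √(2a^2-1)). Consequently, the left-hand side is ≤ 1 if and only if r ≤ α_+ or α_- ≤ r < 1. -/
/-!
Writing the coefficient as `j (a² - 1) + 2a²`, the series is a combination of `Σ j x^j` and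
`Σ x^j` at `x = a r`, so it sums to `r (2a - (1 + a²) r) / (1 - a r)²`; the first identity is
then a rational identity. The quadratic `(1 + 2a²) r² - 4a r + 1` has discriminant
`4(2a² - 1)` and roots `1 / (2a ± √(2a² - 1))`, and since `(1 - a²)(1 + 2a²) > 0` the sign of
`1 - S` is the sign of this quadratic.
-/

open Real

theorem hasSum_zpow_sub_one_mul_pow_succ {𝕜 : Type*} [NormedField 𝕜] [CompleteSpace 𝕜]
    {a r : 𝕜} (ha : a ≠ 0) (har : ‖a * r‖ < 1) :
    HasSum (fun j : ℕ ↦ a ^ ((j : ℤ) - 1) * (((j : 𝕜) + 2) * a ^ 2 - j) * r ^ (j + 1))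
      (r * (2 * a - (1 + a ^ 2) * r) / (1 - a * r) ^ 2) := by
  have hden : 1 - a * r ≠ 0 := by
    intro h
    rw [← eq_of_sub_eq_zero h, norm_one] at har
    exact lt_irrefl _ har
  have hsum : r * (2 * a - (1 + a ^ 2) * r) / (1 - a * r) ^ 2 =
      r * (a ^ 2 - 1) / a * (a * r / (1 - a * r) ^ 2) + 2 * a * r * (1 - a * r)⁻¹ := by
    field_simp
    ring
  rw [hsum]
  refine ((hasSum_coe_mul_geometric_of_norm_lt_one har).mul_left _).add
    ((hasSum_geometric_of_norm_lt_one har).mul_left _) |>.congr_fun fun j ↦ ?_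
  rw [zpow_sub_one₀ ha, zpow_natCast, mul_pow, pow_succ]
  field_simp
  ring

theorem quadratic_eq_mul_sub_one_div_mul_sub_one_div {a s : ℝ} (hs : s ^ 2 = 2 * a ^ 2 - 1)
    (r : ℝ) :
    (1 + 2 * a ^ 2) * r ^ 2 - 4 * a * r + 1 =
      (1 + 2 * a ^ 2) * (r - 1 / (2 * a + s)) * (r - 1 / (2 * a - s)) := by
  have hprod : (2 * a + s) * (2 * a - s) = 1 + 2 * a ^ 2 := by linear_combination -hs
  have hplus : 2 * a + s ≠ 0 := by
    intro h
    rw [h, zero_mul] at hprod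
    nlinarith
  have hminus : 2 * a - s ≠ 0 := by
    intro h
    rw [h, mul_zero] at hprod
    nlinarith
  field_simp
  linear_combination (4 * a * r - 1) * hs

theorem one_half_lt_sq_of_inv_sqrt_two_lt {a : ℝ} (ha : 1 / √2 < a) : 1 / 2 < a ^ 2 := by
  have h := pow_lt_pow_left₀ ha (by positivity) two_ne_zero
  rwa [div_pow, one_pow, sq_sqrt zero_le_two] at h

/-- The identity behind the sharpness of `1/3` in Corollary 2(b): for `a ∈ (1/√2, 1)`
and `r ∈ [0,1)`, with `S = ((r-a)/(1-ar))^2 + 2(1-a^2) Σ_{k≥1} a^{k-2}((k+1)a^2-(k-1)) r^k`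
(the series written with index `k = j+1`), one has
`S = 1 - (1-a^2)((1+2a^2)r^2 - 4ar + 1)/(1-ar)^2`
`  = 1 - (1-a^2)(1+2a^2)(r-α₊)(r-α₋)/(1-ar)^2`, where `α± = 1/(2a ± √(2a^2-1))`,
and consequently `S ≤ 1 ↔ r ≤ α₊ ∨ α₋ ≤ r`. -/
theorem statement10 (a r : ℝ) (ha0 : 1 / Real.sqrt 2 < a) (ha1 : a < 1)
    (hr0 : 0 ≤ r) (hr1 : r < 1)
    (S αp αm : ℝ)
    (hS : S = ((r - a) / (1 - a * r)) ^ 2 +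
      2 * (1 - a ^ 2) *
        ∑' j : ℕ, a ^ ((j : ℤ) - 1) * (((j : ℝ) + 2) * a ^ 2 - (j : ℝ)) * r ^ (j + 1))
    (hαp : αp = 1 / (2 * a + Real.sqrt (2 * a ^ 2 - 1)))
    (hαm : αm = 1 / (2 * a - Real.sqrt (2 * a ^ 2 - 1))) :
    S = 1 - (1 - a ^ 2) * ((1 + 2 * a ^ 2) * r ^ 2 - 4 * a * r + 1) / (1 - a * r) ^ 2 ∧
    S = 1 - (1 - a ^ 2) * (1 + 2 * a ^ 2) * (r - αp) * (r - αm) / (1 - a * r) ^ 2 ∧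
    (S ≤ 1 ↔ r ≤ αp ∨ αm ≤ r) := by
  have ha : 0 < a := (by positivity : (0 : ℝ) < 1 / √2).trans ha0
  have ha2 := one_half_lt_sq_of_inv_sqrt_two_lt ha0
  have har : a * r < 1 := by nlinarith
  have hden : 0 < 1 - a * r := sub_pos.mpr har
  have hs := sq_sqrt (by linarith : 0 ≤ 2 * a ^ 2 - 1)
  have hS1 : S = 1 - (1 - a ^ 2) * ((1 + 2 * a ^ 2) * r ^ 2 - 4 * a * r + 1) / (1 - a * r) ^ 2 := by
    have hnorm : ‖a * r‖ < 1 := by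
      rwa [Real.norm_of_nonneg (by positivity)]
    rw [hS, (hasSum_zpow_sub_one_mul_pow_succ ha.ne' hnorm).tsum_eq]
    have : 1 - r * a ≠ 0 := by rw [mul_comm]; exact hden.ne'
    field_simp
    ring
  have hS2 : S = 1 - (1 - a ^ 2) * (1 + 2 * a ^ 2) * (r - αp) * (r - αm) / (1 - a * r) ^ 2 := by
    rw [hS1, hαp, hαm, quadratic_eq_mul_sub_one_div_mul_sub_one_div hs]
    ring
  have hroots : αp ≤ αm := by
    rw [hαp, hαm]
    have hsqrt_lt : √(2 * a ^ 2 - 1) < 2 * a := by nlinarith [sqrt_nonneg (2 * a ^ 2 - 1)]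
    exact one_div_le_one_div_of_le (by linarith) (by linarith [sqrt_nonneg (2 * a ^ 2 - 1)])
  have hcoeff : 0 < (1 - a ^ 2) * (1 + 2 * a ^ 2) / (1 - a * r) ^ 2 := by
    have : 0 < 1 - a ^ 2 := by nlinarith
    positivity
  refine ⟨hS1, hS2, ?_⟩
  rw [hS2, sub_le_self_iff, mul_assoc, mul_div_right_comm, mul_nonneg_iff_of_pos_left hcoeff,
    sub_mul_sub_nonneg_iff r hroots]
end

section
/- Let k ∈ [0,1], let h be analytic on 𝔻 with Taylor expansion h(z) = Σ_{n=0}^∞ a_n z^n, and let g be analytic on 𝔻 with g(0) = 0, g(z) = Σ_{n=1}^∞ b_n z^n, and |g'(z)| ≤ k|h'(z)| for all z ∈ 𝔻. Then for every r ∈ [0,1), Σ_{n=1}^∞ |b_n|^2 r^{2n} ≤ k^2·Σ_{n=1}^∞ |a_n|^2 r^{2n}. -/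
/-!
Write `g' z = ∑ (n + 1) b_{n+1} z ^ n` and likewise for `h'`. Parseval's identity on the circle
`|z| = ρ` turns the pointwise bound `|g'| ≤ k |h'|` into
`∑ (n + 1)² |b_{n+1}|² ρ^{2n} = ⨍ |g'|² ≤ k² ⨍ |h'|² = k² ∑ (n + 1)² |a_{n+1}|² ρ^{2n}`.
The weight `(n + 1)²` is then removed by integrating twice in `u = ρ²`: for nonnegative
coefficients, `∫₀ˣ ∑ (n + 1) p_n uⁿ du = x ∑ p_n xⁿ` by monotone convergence, so an inequality
`∑ (n + 1) p_n uⁿ ≤ ∑ (n + 1) q_n uⁿ` on `(0, R)` implies `∑ p_n xⁿ ≤ ∑ q_n xⁿ` there.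
-/

open MeasureTheory Set AddCircle FormalMultilinearSeries Real

section Fourier

variable {T : ℝ} [Fact (0 < T)]

theorem summable_smul_fourier {c : ℤ → ℂ} (hc : Summable (‖c ·‖)) :
    Summable fun i => c i • (fourier i : C(AddCircle T, ℂ)) :=
  .of_norm <| by simpa [norm_smul, fourier_norm] using hc

theorem fourierCoeff_tsum_smul_fourier {c : ℤ → ℂ} (hc : Summable (‖c ·‖)) (j : ℤ) :
    fourierCoeff ⇑(∑' i, c i • fourier i : C(AddCircle T, ℂ)) j = c j := by
  have hF : HasSum (fun i => c i • fourierLp 2 i)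
      (ContinuousMap.toLp 2 haarAddCircle ℂ (∑' i, c i • fourier i : C(AddCircle T, ℂ))) := by
    simpa using (ContinuousMap.toLp 2 haarAddCircle ℂ).hasSum (summable_smul_fourier hc).hasSum
  have hinner := hF.mapL (innerSL ℂ (fourierLp 2 j))
  simp only [innerSL_apply_apply, inner_smul_right,
    orthonormal_iff_ite.mp orthonormal_fourier, mul_ite, mul_one, mul_zero] at hinner
  rw [← fourierCoeff_toLp, ← fourierBasis_repr, HilbertBasis.repr_apply_apply, coe_fourierBasis]
  simpa using hinner.unique (hasSum_single j fun i hi => if_neg (Ne.symm hi))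

theorem hasSum_sq_norm_integral_tsum_smul_fourier {c : ℤ → ℂ} (hc : Summable (‖c ·‖)) :
    HasSum (fun i => ‖c i‖ ^ 2)
      (∫ x, ‖(∑' i, c i • fourier i : C(AddCircle T, ℂ)) x‖ ^ 2 ∂haarAddCircle) := by
  have h := hasSum_sq_fourierCoeff
    (ContinuousMap.toLp 2 haarAddCircle ℂ (∑' i, c i • fourier i : C(AddCircle T, ℂ)))
  simp only [fourierCoeff_toLp, fourierCoeff_tsum_smul_fourier hc] at h
  convert h using 1
  exact integral_congr_ae ((ContinuousMap.coeFn_toLp _ _).fun_comp fun z => ‖z‖ ^ 2).symm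

theorem hasSum_sq_norm_integral_tsum_mul_fourier {c : ℕ → ℂ} (hc : Summable (‖c ·‖)) :
    HasSum (fun n => ‖c n‖ ^ 2)
      (∫ x : AddCircle T, ‖∑' n : ℕ, c n * fourier n x‖ ^ 2 ∂haarAddCircle) := by
  set d : ℤ → ℂ := Function.extend ((↑) : ℕ → ℤ) c 0
  have hd_natCast (n : ℕ) : d n = c n := Nat.cast_injective.extend_apply _ _ n
  have hd_of_notMem (i : ℤ) (hi : i ∉ range ((↑) : ℕ → ℤ)) : d i = 0 :=
    Function.extend_apply' _ _ _ hi
  clear_value d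
  have hd : Summable (‖d ·‖) :=
    (Nat.cast_injective.summable_iff fun i hi => by simp [hd_of_notMem i hi]).mp
      (by simpa [Function.comp_def, hd_natCast] using hc)
  have hF (x : AddCircle T) :
      (∑' i, d i • fourier i : C(AddCircle T, ℂ)) x = ∑' n : ℕ, c n * fourier n x := by
    rw [← ContinuousMap.tsum_apply (summable_smul_fourier hd), ← Nat.cast_injective.tsum_eq]
    · simp [hd_natCast]
    · intro i hi
      by_contra hi'
      exact hi (by simp [hd_of_notMem i hi'])
  have h := hasSum_sq_norm_integral_tsum_smul_fourier (T := T) hd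
  simp only [hF] at h
  simpa [Function.comp_def, hd_natCast] using
    (Nat.cast_injective.hasSum_iff fun i hi => by simp [hd_of_notMem i hi]).mpr h

end Fourier

theorem hasSum_sq_norm_mul_pow_circleAverage {c : ℕ → ℂ} {f : ℂ → ℂ} {R : ℝ} (hR : 0 ≤ R)
    (hc : Summable fun n => ‖c n‖ * R ^ n)
    (hf : ∀ z ∈ Metric.sphere (0 : ℂ) R, HasSum (fun n => c n * z ^ n) (f z)) :
    HasSum (fun n => ‖c n‖ ^ 2 * R ^ (2 * n)) (circleAverage (fun z => ‖f z‖ ^ 2) 0 R) := by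
  have : Fact (0 < 2 * π) := ⟨two_pi_pos⟩
  have hF (θ : ℝ) : ∑' n : ℕ, c n * R ^ n * fourier n (θ : AddCircle (2 * π)) =
      f (circleMap 0 R θ) := by
    rw [← (hf (circleMap 0 R θ) (by simp [abs_of_nonneg hR])).tsum_eq]
    refine tsum_congr fun n => ?_
    rw [fourier_coe_apply, circleMap, zero_add, mul_pow, ← Complex.exp_nat_mul, mul_assoc]
    congr 3
    push_cast
    field_simp
  have h := hasSum_sq_norm_integral_tsum_mul_fourier (T := 2 * π) (c := fun n => c n * R ^ n)
    (by simpa [abs_of_nonneg hR] using hc)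
  rw [integral_haarAddCircle, ← AddCircle.intervalIntegral_preimage (2 * π) 0, zero_add] at h
  simp only [hF] at h
  rw [← circleAverage_def (f := fun z => ‖f z‖ ^ 2)] at h
  simpa [mul_pow, ← pow_mul, abs_of_nonneg hR, mul_comm] using h

section PowerSeries

theorem enorm_lt_one_iff_norm_lt_one {E : Type*} [SeminormedAddGroup E] {x : E} :
    ‖x‖ₑ < 1 ↔ ‖x‖ < 1 := by
  rw [← ofReal_norm, ENNReal.ofReal_lt_one]

variable {β : ℕ → ℂ} {G : ℂ → ℂ}

theorem one_le_radius_ofScalars (hβ : ∀ z : ℂ, ‖z‖ < 1 → Summable fun n => β n * z ^ n) :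
    1 ≤ (ofScalars ℂ β).radius := by
  refine ENNReal.le_of_forall_nnreal_lt fun r hr =>
    (ofScalars ℂ β).le_radius_of_tendsto (l := 0) ?_
  simpa [ofScalars_norm] using (hβ r (by simpa using hr)).tendsto_atTop_zero.norm

theorem summable_norm_mul_pow_of_summable (hβ : ∀ z : ℂ, ‖z‖ < 1 → Summable fun n => β n * z ^ n)
    {ρ : ℝ} (hρ0 : 0 ≤ ρ) (hρ1 : ρ < 1) : Summable fun n => ‖β n‖ * ρ ^ n := by
  lift ρ to NNReal using hρ0
  have hρ : (ρ : ENNReal) < (ofScalars ℂ β).radius :=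
    (ENNReal.coe_lt_one_iff.mpr hρ1).trans_le (one_le_radius_ofScalars hβ)
  simpa [ofScalars_norm] using (ofScalars ℂ β).summable_norm_mul_pow hρ

theorem hasFPowerSeriesOnBall_ofScalars
    (hG : ∀ z : ℂ, ‖z‖ < 1 → HasSum (fun n => β n * z ^ n) (G z)) :
    HasFPowerSeriesOnBall G (ofScalars ℂ β) 0 1 where
  r_le := one_le_radius_ofScalars fun z hz => (hG z hz).summable
  r_pos := one_pos
  hasSum hy := by
    simpa [ofScalars_apply_eq, mul_comm] using
      hG _ (by simpa [enorm_lt_one_iff_norm_lt_one] using hy)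

theorem hasSum_deriv_of_hasSum_pow (hG : ∀ z : ℂ, ‖z‖ < 1 → HasSum (fun n => β n * z ^ n) (G z))
    {z : ℂ} (hz : ‖z‖ < 1) :
    HasSum (fun n => (n + 1) * β (n + 1) * z ^ n) (deriv G z) := by
  have h := ((hasFPowerSeriesOnBall_ofScalars hG).fderiv.hasSum (y := z)
    (by simpa [enorm_lt_one_iff_norm_lt_one] using hz)).mapL (ContinuousLinearMap.apply ℂ ℂ 1)
  simpa [derivSeries_coeff_one, mul_comm] using h

theorem continuousOn_deriv_of_hasSum_pow
    (hG : ∀ z : ℂ, ‖z‖ < 1 → HasSum (fun n => β n * z ^ n) (G z)) :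
    ContinuousOn (deriv G) (Metric.ball 0 1) := fun z hz =>
  ((hasFPowerSeriesOnBall_ofScalars hG).analyticAt_of_mem
    (by simpa [enorm_lt_one_iff_norm_lt_one] using hz)).deriv.continuousAt.continuousWithinAt

end PowerSeries

section RealSeries

variable {p q : ℕ → ℝ}

theorem summable_mul_pow_of_summable_succ_mul (hp : ∀ n, 0 ≤ p n) {u : ℝ} (hu : 0 ≤ u)
    (h : Summable fun n : ℕ => (n + 1) * p n * u ^ n) : Summable fun n => p n * u ^ n :=
  h.of_nonneg_of_le (fun n => mul_nonneg (hp n) (pow_nonneg hu n)) fun n => by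
    rw [mul_assoc]
    exact le_mul_of_one_le_left (mul_nonneg (hp n) (pow_nonneg hu n))
      (le_add_of_nonneg_left n.cast_nonneg)

theorem lintegral_tsum_ofReal_succ_mul_mul_pow (hp : ∀ n, 0 ≤ p n) {x : ℝ} (hx : 0 ≤ x) :
    ∫⁻ u in Ioo 0 x, ∑' n : ℕ, ENNReal.ofReal ((n + 1) * p n * u ^ n) =
      ∑' n, ENNReal.ofReal (p n * x ^ (n + 1)) := by
  rw [lintegral_tsum fun n => by fun_prop]
  refine tsum_congr fun n => ?_
  rw [← ofReal_integral_eq_lintegral_ofReal, ← integral_Ioc_eq_integral_Ioo,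
    ← intervalIntegral.integral_of_le hx, intervalIntegral.integral_const_mul, integral_pow]
  · field_simp
    simp
  · exact (Continuous.integrableOn_Icc (by fun_prop)).mono_set Ioo_subset_Icc_self
  · filter_upwards [ae_restrict_mem measurableSet_Ioo] with u hu
    have := hp n
    have := hu.1.le
    positivity

theorem ofReal_mul_tsum_mul_pow_eq_lintegral (hp : ∀ n, 0 ≤ p n) {x : ℝ} (hx : 0 < x)
    (hps : ∀ u ∈ Ioc 0 x, Summable fun n : ℕ => (n + 1) * p n * u ^ n) :
    ENNReal.ofReal (x * ∑' n, p n * x ^ n) =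
      ∫⁻ u in Ioo 0 x, ENNReal.ofReal (∑' n : ℕ, (n + 1) * p n * u ^ n) := by
  rw [setLIntegral_congr_fun measurableSet_Ioo fun u hu =>
      ENNReal.ofReal_tsum_of_nonneg (fun n => by have := hp n; have := hu.1.le; positivity)
        (hps u (Ioo_subset_Ioc_self hu)),
    lintegral_tsum_ofReal_succ_mul_mul_pow hp hx.le, ← tsum_mul_left,
    ENNReal.ofReal_tsum_of_nonneg (fun n => by have := hp n; positivity)
      ((summable_mul_pow_of_summable_succ_mul hp hx.le (hps x ⟨hx, le_rfl⟩)).mul_left x)]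
  exact tsum_congr fun n => by ring_nf

theorem tsum_mul_pow_le_of_tsum_succ_mul_mul_pow_le (hp : ∀ n, 0 ≤ p n) (hq : ∀ n, 0 ≤ q n)
    {R : ℝ} (hps : ∀ u ∈ Ioo 0 R, Summable fun n : ℕ => (n + 1) * p n * u ^ n)
    (hqs : ∀ u ∈ Ioo 0 R, Summable fun n : ℕ => (n + 1) * q n * u ^ n)
    (hle : ∀ u ∈ Ioo 0 R, ∑' n : ℕ, (n + 1) * p n * u ^ n ≤ ∑' n : ℕ, (n + 1) * q n * u ^ n)
    {x : ℝ} (hx : x ∈ Ioo 0 R) : ∑' n, p n * x ^ n ≤ ∑' n, q n * x ^ n := by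
  have hsub : Ioc 0 x ⊆ Ioo 0 R := Ioc_subset_Ioo_right hx.2
  refine le_of_mul_le_mul_left ?_ hx.1
  rw [← ENNReal.ofReal_le_ofReal_iff, ofReal_mul_tsum_mul_pow_eq_lintegral hp hx.1
    fun u hu => hps u (hsub hu), ofReal_mul_tsum_mul_pow_eq_lintegral hq hx.1
    fun u hu => hqs u (hsub hu)]
  · refine setLIntegral_mono' measurableSet_Ioo fun u hu => ENNReal.ofReal_le_ofReal ?_
    exact hle u (hsub (Ioo_subset_Ioc_self hu))
  · exact mul_nonneg hx.1.le (tsum_nonneg fun n => by have := hq n; have := hx.1.le; positivity)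

theorem tsum_mul_pow_le_of_tsum_succ_sq_mul_mul_pow_le (hp : ∀ n, 0 ≤ p n) (hq : ∀ n, 0 ≤ q n)
    {R : ℝ} (hps : ∀ u ∈ Ioo 0 R, Summable fun n : ℕ => (n + 1) ^ 2 * p n * u ^ n)
    (hqs : ∀ u ∈ Ioo 0 R, Summable fun n : ℕ => (n + 1) ^ 2 * q n * u ^ n)
    (hle : ∀ u ∈ Ioo 0 R,
      ∑' n : ℕ, (n + 1) ^ 2 * p n * u ^ n ≤ ∑' n : ℕ, (n + 1) ^ 2 * q n * u ^ n)
    {x : ℝ} (hx : x ∈ Ioo 0 R) : ∑' n, p n * x ^ n ≤ ∑' n, q n * x ^ n := by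
  have hsucc (r : ℕ → ℝ) (u : ℝ) : (fun n : ℕ => (n + 1) * ((n + 1) * r n) * u ^ n) =
      fun n : ℕ => (n + 1) ^ 2 * r n * u ^ n := funext fun n => by ring
  have hp' (n : ℕ) : 0 ≤ (n + 1) * p n := by have := hp n; positivity
  have hq' (n : ℕ) : 0 ≤ (n + 1) * q n := by have := hq n; positivity
  have hps' (u) (hu : u ∈ Ioo 0 R) := hsucc p u ▸ hps u hu
  have hqs' (u) (hu : u ∈ Ioo 0 R) := hsucc q u ▸ hqs u hu
  refine tsum_mul_pow_le_of_tsum_succ_mul_mul_pow_le hp hq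
    (fun u hu => summable_mul_pow_of_summable_succ_mul hp' hu.1.le (hps' u hu))
    (fun u hu => summable_mul_pow_of_summable_succ_mul hq' hu.1.le (hqs' u hu))
    (fun u hu => tsum_mul_pow_le_of_tsum_succ_mul_mul_pow_le hp' hq' hps' hqs'
      (fun v hv => by simpa only [hsucc] using hle v hv) hu) hx

end RealSeries

section DerivativeParseval

variable {β : ℕ → ℂ} {G : ℂ → ℂ}

theorem hasSum_sq_deriv_coeff_mul_pow
    (hG : ∀ z : ℂ, ‖z‖ < 1 → HasSum (fun n => β n * z ^ n) (G z)) {u : ℝ} (hu0 : 0 ≤ u)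
    (hu1 : u < 1) :
    HasSum (fun n : ℕ => (n + 1) ^ 2 * ‖β (n + 1)‖ ^ 2 * u ^ n)
      (circleAverage (fun z => ‖deriv G z‖ ^ 2) 0 √u) := by
  have hρ1 : √u < 1 := (sqrt_lt' one_pos).mpr (by simpa using hu1)
  have hderiv (z : ℂ) (hz : ‖z‖ < 1) := hasSum_deriv_of_hasSum_pow hG hz
  have h := hasSum_sq_norm_mul_pow_circleAverage (sqrt_nonneg u)
    (summable_norm_mul_pow_of_summable (fun z hz => (hderiv z hz).summable) (sqrt_nonneg u) hρ1)
    fun z hz => hderiv z (by simpa [mem_sphere_zero_iff_norm.mp hz] using hρ1)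
  refine h.congr_fun fun n => ?_
  rw [norm_mul, ← Nat.cast_add_one (R := ℂ), Complex.norm_natCast, mul_pow, Nat.cast_add_one,
    pow_mul, sq_sqrt hu0]

theorem tsum_sq_deriv_coeff_mul_pow_le {a b : ℕ → ℂ} {h g : ℂ → ℂ} {k : ℝ}
    (hh : ∀ z : ℂ, ‖z‖ < 1 → HasSum (fun n => a n * z ^ n) (h z))
    (hg : ∀ z : ℂ, ‖z‖ < 1 → HasSum (fun n => b n * z ^ n) (g z))
    (hder : ∀ z : ℂ, ‖z‖ < 1 → ‖deriv g z‖ ≤ k * ‖deriv h z‖) {u : ℝ} (hu0 : 0 ≤ u)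
    (hu1 : u < 1) :
    ∑' n : ℕ, (n + 1) ^ 2 * ‖b (n + 1)‖ ^ 2 * u ^ n ≤
      k ^ 2 * ∑' n : ℕ, (n + 1) ^ 2 * ‖a (n + 1)‖ ^ 2 * u ^ n := by
  rw [(hasSum_sq_deriv_coeff_mul_pow hg hu0 hu1).tsum_eq,
    (hasSum_sq_deriv_coeff_mul_pow hh hu0 hu1).tsum_eq, ← smul_eq_mul, ← circleAverage_fun_smul]
  have hball : Metric.sphere (0 : ℂ) |√u| ⊆ Metric.ball 0 1 := Metric.sphere_subset_ball <| by
    rw [abs_of_nonneg (sqrt_nonneg u), sqrt_lt' one_pos]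
    simpa using hu1
  have hg' := (continuousOn_deriv_of_hasSum_pow hg).mono hball
  have hh' := (continuousOn_deriv_of_hasSum_pow hh).mono hball
  refine circleAverage_mono (ContinuousOn.circleIntegrable' (by fun_prop))
    (ContinuousOn.circleIntegrable' (by fun_prop)) fun z hz => ?_
  rw [smul_eq_mul, ← mul_pow]
  exact pow_le_pow_left₀ (norm_nonneg _) (hder z (mem_ball_zero_iff.mp (hball hz))) 2

end DerivativeParseval

theorem statement13_general (k : ℝ)
    (h g : ℂ → ℂ) (a b : ℕ → ℂ)
    (hh : ∀ z : ℂ, ‖z‖ < 1 → HasSum (fun n : ℕ => a n * z ^ n) (h z))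
    (hgs : ∀ z : ℂ, ‖z‖ < 1 → HasSum (fun n : ℕ => b n * z ^ n) (g z))
    (hder : ∀ z : ℂ, ‖z‖ < 1 → ‖deriv g z‖ ≤ k * ‖deriv h z‖) :
    ∀ r : ℝ, 0 ≤ r → r < 1 →
      (∑' n : ℕ, ‖b (n + 1)‖ ^ 2 * r ^ (2 * (n + 1))) ≤
        k ^ 2 * ∑' n : ℕ, ‖a (n + 1)‖ ^ 2 * r ^ (2 * (n + 1)) := by
  have hle (u : ℝ) (hu : u ∈ Ioo 0 1) : ∑' n : ℕ, (n + 1) ^ 2 * ‖b (n + 1)‖ ^ 2 * u ^ n ≤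
      ∑' n : ℕ, (n + 1) ^ 2 * (k ^ 2 * ‖a (n + 1)‖ ^ 2) * u ^ n := by
    refine (tsum_sq_deriv_coeff_mul_pow_le hh hgs hder hu.1.le hu.2).trans_eq ?_
    rw [← tsum_mul_left]
    exact tsum_congr fun n => by ring
  have hineq (u : ℝ) (hu : u ∈ Ioo 0 1) :
      ∑' n, ‖b (n + 1)‖ ^ 2 * u ^ n ≤ ∑' n, k ^ 2 * ‖a (n + 1)‖ ^ 2 * u ^ n :=
    tsum_mul_pow_le_of_tsum_succ_sq_mul_mul_pow_le (fun n => sq_nonneg _) (fun n => by positivity)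
      (fun v hv => (hasSum_sq_deriv_coeff_mul_pow hgs hv.1.le hv.2).summable)
      (fun v hv => ((hasSum_sq_deriv_coeff_mul_pow hh hv.1.le hv.2).summable.mul_left (k ^ 2)).congr
        fun n => by ring) hle hu
  intro r hr0 hr1
  rcases hr0.eq_or_lt with rfl | hr
  · simp
  calc ∑' n : ℕ, ‖b (n + 1)‖ ^ 2 * r ^ (2 * (n + 1))
      = r ^ 2 * ∑' n, ‖b (n + 1)‖ ^ 2 * (r ^ 2) ^ n := by
        rw [← tsum_mul_left]; congr with n; ring
    _ ≤ r ^ 2 * ∑' n, k ^ 2 * ‖a (n + 1)‖ ^ 2 * (r ^ 2) ^ n :=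
        mul_le_mul_of_nonneg_left (hineq _ ⟨by positivity, by nlinarith⟩) (by positivity)
    _ = k ^ 2 * ∑' n : ℕ, ‖a (n + 1)‖ ^ 2 * r ^ (2 * (n + 1)) := by
        rw [← tsum_mul_left, ← tsum_mul_left]; congr with n; ring

/-- If `h(z) = Σ_{n≥0} a_n z^n` and `g(z) = Σ_{n≥1} b_n z^n` are analytic on `𝔻` with
`g(0) = 0` and `|g'(z)| ≤ k|h'(z)|` on `𝔻` for some `k ∈ [0,1]`, then for every
`r ∈ [0,1)` one has `Σ_{n≥1} |b_n|² r^{2n} ≤ k² Σ_{n≥1} |a_n|² r^{2n}`. -/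
theorem statement13 (k : ℝ) (hk0 : 0 ≤ k) (hk1 : k ≤ 1)
    (h g : ℂ → ℂ) (a b : ℕ → ℂ)
    (hh : ∀ z : ℂ, ‖z‖ < 1 → HasSum (fun n : ℕ => a n * z ^ n) (h z))
    (hgs : ∀ z : ℂ, ‖z‖ < 1 → HasSum (fun n : ℕ => b n * z ^ n) (g z))
    (hhd : DifferentiableOn ℂ h (Metric.ball (0 : ℂ) 1))
    (hgd : DifferentiableOn ℂ g (Metric.ball (0 : ℂ) 1))
    (hg0 : g 0 = 0)
    (hder : ∀ z : ℂ, ‖z‖ < 1 → ‖deriv g z‖ ≤ k * ‖deriv h z‖) :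
    ∀ r : ℝ, 0 ≤ r → r < 1 →
      (∑' n : ℕ, ‖b (n + 1)‖ ^ 2 * r ^ (2 * (n + 1))) ≤
        k ^ 2 * ∑' n : ℕ, ‖a (n + 1)‖ ^ 2 * r ^ (2 * (n + 1)) :=
  statement13_general k h g a b hh hgs hder
end
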